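/- arXiv:2112.12406 — 6 statements merged into one kernel-verified Lean document; each statement's English description precedes it below -/
import Mathlib

section
/- Let Λ₁ < Λ₂, T > 0, β > 0 and a ≥ 0. Let h : (Λ₁,Λ₂) × (0,T) → (0,∞) be four times continuously differentiable in x and once in t, let ζ₁, ζ₂ : (Λ₁,Λ₂) × (0,T) → ℝ be twice continuously differentiable in x, and let u, v, p be twice continuously differentiable on the closure of Ω = {(x,y,t) : Λ₁ < x < Λ₂, 0 < y < h(x,t), 0 < t < T}. Assume: (i) in Ω: ∂ₓu + ∂_y v = 0, ∂_y² u = ∂ₓ p, and ∂_y p = 0; (ii) at y = h(x,t): ∂ₜh + u ∂ₓh = v, p = −∂ₓ²h, and ∂_y u = −∂ₓζ₁; (iii) at y = 0: v = 0 and ∂_y u = (a/2)∂ₓζ₂ + β u. Then h satisfies the thin film equation ∂ₜh + ∂ₓ[ (h/3 + 1/β) h² ∂ₓ³h − ½(∂ₓζ₁) h² − (1/β)(∂ₓζ₁ + (a/2)∂ₓζ₂) h ] = 0 on (Λ₁,Λ₂) × (0,T). -/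
open Set

/-!
Fix `t`. Since `∂_y p = 0`, the pressure equals its surface value `-∂ₓ²h` across the film, so
`∂ₓp = -∂ₓ³h` does not depend on `y`. Integrating `∂_y²u = ∂ₓp` twice, with the Marangoni
condition at `y = h` and the Navier slip condition at `y = 0`, gives a parabolic profile
`u = c₂ y² + c₁ y + c₀` with coefficients depending on `x` only. Integrating incompressibility
upwards from the impermeable wall gives `v(h) = -∫₀ʰ ∂ₓu dy`, so the kinematic condition becomes
`∂ₜh + ∂ₓQ = 0` for the flux `Q = ∫₀ʰ u dy = c₂h³/3 + c₁h²/2 + c₀h`, which is the bracket of the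
thin film equation. Every integration in `y` is done by comparing with an explicit polynomial
through the mean value theorem.
-/

lemma sub_eq_sub_of_deriv_eqOn_Ioo {f g : ℝ → ℝ} {A B y : ℝ} (hf : Differentiable ℝ f)
    (hg : Differentiable ℝ g) (hfg : EqOn (deriv f) (deriv g) (Ioo A B)) (hy : y ∈ Icc A B) :
    f y - f A = g y - g A := by
  rcases hy.1.eq_or_lt with rfl | hAy
  · simp
  obtain ⟨c, hc, hslope⟩ := exists_deriv_eq_slope (fun z => f z - g z) hAy
    (hf.sub hg).continuous.continuousOn (hf.sub hg).differentiableOn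
  rw [deriv_fun_sub (hf c) (hg c), hfg ⟨hc.1, hc.2.trans_le hy.2⟩, sub_self, eq_comm,
    div_eq_zero_iff, sub_eq_zero, sub_eq_zero] at hslope
  rcases hslope with h | h
  · linarith
  · exact absurd h hAy.ne'

lemma eq_add_cubic_of_deriv_eq_quadratic {f : ℝ → ℝ} {H a b c y : ℝ} (hf : Differentiable ℝ f)
    (hf' : ∀ z ∈ Ioo 0 H, deriv f z = a * z ^ 2 + b * z + c) (hy : y ∈ Icc 0 H) :
    f y = f 0 + (a / 3 * y ^ 3 + b / 2 * y ^ 2 + c * y) := by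
  have hcubic : ∀ z, HasDerivAt (fun z => a / 3 * z ^ 3 + b / 2 * z ^ 2 + c * z)
      (a * z ^ 2 + b * z + c) z := fun z =>
    ((((hasDerivAt_pow 3 z).const_mul (a / 3)).add
      ((hasDerivAt_pow 2 z).const_mul (b / 2))).add ((hasDerivAt_id' z).const_mul c)).congr_deriv
      (by push_cast; ring)
  have := sub_eq_sub_of_deriv_eqOn_Ioo hf (fun z => (hcubic z).differentiableAt)
    (fun z hz => by rw [hf' z hz, (hcubic z).deriv]) hy
  simp only [ne_eq, OfNat.ofNat_ne_zero, not_false_eq_true, zero_pow, mul_zero, add_zero,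
    sub_zero] at this
  linarith

lemma deriv_eq_of_eqOn_film {s : Set ℝ} {H : ℝ → ℝ} {f g : ℝ → ℝ → ℝ} (hs : IsOpen s)
    (hH : Continuous H) (hfg : ∀ x ∈ s, ∀ y ∈ Icc 0 (H x), f x y = g x y) {x y : ℝ}
    (hx : x ∈ s) (hy : y ∈ Ico 0 (H x)) :
    deriv (fun x' => f x' y) x = deriv (fun x' => g x' y) x := by
  refine Filter.EventuallyEq.deriv_eq ?_
  filter_upwards [(hs.inter (isOpen_lt continuous_const hH)).mem_nhds ⟨hx, hy.2⟩] with x' hx'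
  exact hfg x' hx'.1 y ⟨hy.1, hx'.2.le⟩

lemma eq_parabolic_profile_of_navier_slip {u : ℝ → ℝ} {H G τ σ β y : ℝ} (hβ : β ≠ 0)
    (hu : ContDiff ℝ 2 u)
    (hstokes : ∀ z ∈ Ioo 0 H, deriv (deriv u) z = G) (htop : deriv u H = -τ)
    (hslip : deriv u 0 = σ + β * u 0) (hH : 0 ≤ H) (hy : y ∈ Icc 0 H) :
    u y = G / 2 * y ^ 2 + (-τ - G * H) * y + (-τ - G * H - σ) / β := by
  have hshear : ∀ z ∈ Icc 0 H, deriv u z = deriv u 0 + G * z := fun z hz => by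
    simpa using eq_add_cubic_of_deriv_eq_quadratic (a := 0) (b := 0) (c := G)
      hu.differentiable_deriv_two (fun z hz => by simp [hstokes z hz]) hz
  have hshear0 : deriv u 0 = -τ - G * H := by
    linarith [hshear H ⟨hH, le_rfl⟩]
  have hu0 : u 0 = (-τ - G * H - σ) / β := by
    field_simp
    linarith
  have := eq_add_cubic_of_deriv_eq_quadratic (a := 0) (b := G) (c := -τ - G * H)
    (hu.differentiable (by norm_num))
    (fun z hz => by rw [hshear z (Ioo_subset_Icc_self hz), hshear0]; ring) hy
  rw [this, hu0]
  ring

lemma surface_velocity_eq_of_incompressible {s : Set ℝ} {H c₂ c₁ c₀ : ℝ → ℝ} {U V : ℝ → ℝ → ℝ}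
    {x : ℝ} (hs : IsOpen s) (hH : Continuous H)
    (hU : ∀ x ∈ s, ∀ y ∈ Icc 0 (H x), U x y = c₂ x * y ^ 2 + c₁ x * y + c₀ x)
    (hc₂ : DifferentiableAt ℝ c₂ x) (hc₁ : DifferentiableAt ℝ c₁ x)
    (hc₀ : DifferentiableAt ℝ c₀ x) (hV : Differentiable ℝ (V x))
    (hincomp : ∀ y ∈ Ioo 0 (H x), deriv (fun x' => U x' y) x + deriv (V x) y = 0)
    (hbot : V x 0 = 0) (hx : x ∈ s) (hHx : 0 ≤ H x) :
    V x (H x) = -(deriv c₂ x / 3 * H x ^ 3 + deriv c₁ x / 2 * H x ^ 2 + deriv c₀ x * H x) := by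
  have hUx : ∀ y ∈ Ioo 0 (H x),
      deriv (fun x' => U x' y) x = deriv c₂ x * y ^ 2 + deriv c₁ x * y + deriv c₀ x := by
    intro y hy
    rw [deriv_eq_of_eqOn_film hs hH hU hx (Ioo_subset_Ico_self hy)]
    exact ((hc₂.hasDerivAt.mul_const _).add (hc₁.hasDerivAt.mul_const _)).add
      hc₀.hasDerivAt |>.deriv
  have := eq_add_cubic_of_deriv_eq_quadratic (a := -deriv c₂ x) (b := -deriv c₁ x)
    (c := -deriv c₀ x) hV
    (fun y hy => by linear_combination hincomp y hy - hUx y hy) ⟨hHx, le_rfl⟩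
  rw [this, hbot]
  ring

lemma add_deriv_flux_eq_zero {s : Set ℝ} {H c₂ c₁ c₀ : ℝ → ℝ} {U V : ℝ → ℝ → ℝ}
    {x ht : ℝ} (hs : IsOpen s) (hH : Differentiable ℝ H)
    (hU : ∀ x ∈ s, ∀ y ∈ Icc 0 (H x), U x y = c₂ x * y ^ 2 + c₁ x * y + c₀ x)
    (hc₂ : DifferentiableAt ℝ c₂ x) (hc₁ : DifferentiableAt ℝ c₁ x)
    (hc₀ : DifferentiableAt ℝ c₀ x) (hV : Differentiable ℝ (V x))
    (hincomp : ∀ y ∈ Ioo 0 (H x), deriv (fun x' => U x' y) x + deriv (V x) y = 0)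
    (hbot : V x 0 = 0) (hkin : ht + U x (H x) * deriv H x = V x (H x))
    (hx : x ∈ s) (hHx : 0 ≤ H x) :
    ht + deriv (fun x' => c₂ x' / 3 * H x' ^ 3 + c₁ x' / 2 * H x' ^ 2 + c₀ x' * H x') x = 0 := by
  have hflux : HasDerivAt
      (fun x' => c₂ x' / 3 * H x' ^ 3 + c₁ x' / 2 * H x' ^ 2 + c₀ x' * H x') _ x :=
    (((hc₂.hasDerivAt.div_const 3).mul ((hH x).hasDerivAt.pow 3)).add
      ((hc₁.hasDerivAt.div_const 2).mul ((hH x).hasDerivAt.pow 2))).add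
      (hc₀.hasDerivAt.mul (hH x).hasDerivAt)
  rw [hU x hx (H x) ⟨hHx, le_rfl⟩, surface_velocity_eq_of_incompressible hs hH.continuous hU
    hc₂ hc₁ hc₀ hV hincomp hbot hx hHx] at hkin
  rw [hflux.deriv]
  simp only [Pi.pow_apply]
  push_cast
  linear_combination hkin

theorem thin_film_equation_of_lubrication {s : Set ℝ} {β a : ℝ} {H Z₁ Z₂ ht : ℝ → ℝ}
    {U V P : ℝ → ℝ → ℝ} (hs : IsOpen s) (hβ : β ≠ 0) (hpos : ∀ x ∈ s, 0 ≤ H x)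
    (hH : ContDiff ℝ 4 H) (hZ₁ : Differentiable ℝ Z₁) (hZ₂ : Differentiable ℝ Z₂)
    (hU : ∀ x, ContDiff ℝ 2 (U x)) (hV : ∀ x, Differentiable ℝ (V x))
    (hP : ∀ x, Differentiable ℝ (P x))
    (hincomp : ∀ x ∈ s, ∀ y ∈ Ioo 0 (H x), deriv (fun x' => U x' y) x + deriv (V x) y = 0)
    (hstokes : ∀ x ∈ s, ∀ y ∈ Ioo 0 (H x), deriv (deriv (U x)) y = deriv (fun x' => P x' y) x)
    (hpy : ∀ x ∈ s, ∀ y ∈ Ioo 0 (H x), deriv (P x) y = 0)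
    (hkin : ∀ x ∈ s, ht x + U x (H x) * deriv H x = V x (H x))
    (hpress : ∀ x ∈ s, P x (H x) = -deriv (deriv H) x)
    (htang : ∀ x ∈ s, deriv (U x) (H x) = -Z₁ x)
    (hbot : ∀ x ∈ s, V x 0 = 0)
    (hslip : ∀ x ∈ s, deriv (U x) 0 = a / 2 * Z₂ x + β * U x 0) :
    ∀ x ∈ s, ht x + deriv (fun x' =>
        (H x' / 3 + 1 / β) * H x' ^ 2 * deriv (deriv (deriv H)) x'
          - 1 / 2 * Z₁ x' * H x' ^ 2 - 1 / β * (Z₁ x' + a / 2 * Z₂ x') * H x') x = 0 := by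
  have hH1 : Differentiable ℝ H := hH.differentiable (by norm_num)
  have hH3 : Differentiable ℝ (deriv (deriv (deriv H))) :=
    (hH.iterate_deriv' 1 3).differentiable one_ne_zero
  have hpressure : ∀ x ∈ s, ∀ y ∈ Icc 0 (H x), P x y = -deriv (deriv H) x := by
    intro x hx y hy
    have hconst := fun z (hz : z ∈ Icc 0 (H x)) => eq_add_cubic_of_deriv_eq_quadratic
      (a := 0) (b := 0) (c := 0) (hP x) (fun w hw => by simp [hpy x hx w hw]) hz
    rw [← hpress x hx, hconst y hy, hconst (H x) ⟨hpos x hx, le_rfl⟩]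
    simp
  have hgrad : ∀ x ∈ s, ∀ y ∈ Ioo 0 (H x),
      deriv (fun x' => P x' y) x = -deriv (deriv (deriv H)) x := by
    intro x hx y hy
    rw [deriv_eq_of_eqOn_film hs hH1.continuous hpressure hx (Ioo_subset_Ico_self hy)]
    exact deriv.fun_neg
  set c₂ : ℝ → ℝ := fun x => -deriv (deriv (deriv H)) x / 2
  set c₁ : ℝ → ℝ := fun x => -Z₁ x + deriv (deriv (deriv H)) x * H x
  set c₀ : ℝ → ℝ := fun x => (c₁ x - a / 2 * Z₂ x) / β
  have hprofile : ∀ x ∈ s, ∀ y ∈ Icc 0 (H x), U x y = c₂ x * y ^ 2 + c₁ x * y + c₀ x := by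
    intro x hx y hy
    rw [eq_parabolic_profile_of_navier_slip (G := -deriv (deriv (deriv H)) x) (τ := Z₁ x)
      (σ := a / 2 * Z₂ x) hβ (hU x) (fun z hz => (hstokes x hx z hz).trans (hgrad x hx z hz))
      (htang x hx) (hslip x hx) (hpos x hx) hy]
    ring
  have hflux : (fun x' => c₂ x' / 3 * H x' ^ 3 + c₁ x' / 2 * H x' ^ 2 + c₀ x' * H x') =
      fun x' => (H x' / 3 + 1 / β) * H x' ^ 2 * deriv (deriv (deriv H)) x'
          - 1 / 2 * Z₁ x' * H x' ^ 2 - 1 / β * (Z₁ x' + a / 2 * Z₂ x') * H x' := by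
    funext x'
    simp only [c₂, c₁, c₀]
    field_simp
    ring
  intro x hx
  rw [← hflux]
  exact add_deriv_flux_eq_zero hs hH1 hprofile (by fun_prop) (by fun_prop) (by fun_prop) (hV x)
    (hincomp x hx) (hbot x hx) (hkin x hx) hx (hpos x hx)

theorem thin_film_equation_derivation_general
    (Λ₁ Λ₂ T β a : ℝ) (hβ : 0 < β)
    (h ζ₁ ζ₂ : ℝ × ℝ → ℝ)
    (u v p : ℝ × ℝ × ℝ → ℝ)
    (hpos : ∀ x ∈ Set.Ioo Λ₁ Λ₂, ∀ t ∈ Set.Ioo 0 T, 0 < h (x, t))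
    (hhx : ∀ t : ℝ, ContDiff ℝ 4 (fun x => h (x, t)))
    (hζ₁x : ∀ t : ℝ, ContDiff ℝ 2 (fun x => ζ₁ (x, t)))
    (hζ₂x : ∀ t : ℝ, ContDiff ℝ 2 (fun x => ζ₂ (x, t)))
    (hu : ContDiff ℝ 2 u) (hv : ContDiff ℝ 2 v) (hp : ContDiff ℝ 2 p)
    -- (i) in Ω
    (hincomp : ∀ x ∈ Set.Ioo Λ₁ Λ₂, ∀ t ∈ Set.Ioo 0 T,
      ∀ y ∈ Set.Ioo 0 (h (x, t)),
        deriv (fun x' => u (x', y, t)) x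
          + deriv (fun y' => v (x, y', t)) y = 0)
    (hstokes : ∀ x ∈ Set.Ioo Λ₁ Λ₂, ∀ t ∈ Set.Ioo 0 T,
      ∀ y ∈ Set.Ioo 0 (h (x, t)),
        deriv (deriv (fun y' => u (x, y', t))) y
          = deriv (fun x' => p (x', y, t)) x)
    (hpy : ∀ x ∈ Set.Ioo Λ₁ Λ₂, ∀ t ∈ Set.Ioo 0 T,
      ∀ y ∈ Set.Ioo 0 (h (x, t)),
        deriv (fun y' => p (x, y', t)) y = 0)
    -- (ii) at y = h(x,t)
    (hkin : ∀ x ∈ Set.Ioo Λ₁ Λ₂, ∀ t ∈ Set.Ioo 0 T,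
      deriv (fun t' => h (x, t')) t
          + u (x, h (x, t), t) * deriv (fun x' => h (x', t)) x
        = v (x, h (x, t), t))
    (hpress : ∀ x ∈ Set.Ioo Λ₁ Λ₂, ∀ t ∈ Set.Ioo 0 T,
      p (x, h (x, t), t) = -(deriv (deriv (fun x' => h (x', t))) x))
    (htang : ∀ x ∈ Set.Ioo Λ₁ Λ₂, ∀ t ∈ Set.Ioo 0 T,
      deriv (fun y' => u (x, y', t)) (h (x, t))
        = -(deriv (fun x' => ζ₁ (x', t)) x))
    -- (iii) at y = 0
    (hbot : ∀ x ∈ Set.Ioo Λ₁ Λ₂, ∀ t ∈ Set.Ioo 0 T, v (x, 0, t) = 0)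
    (hslip : ∀ x ∈ Set.Ioo Λ₁ Λ₂, ∀ t ∈ Set.Ioo 0 T,
      deriv (fun y' => u (x, y', t)) 0
        = (a / 2) * deriv (fun x' => ζ₂ (x', t)) x + β * u (x, 0, t)) :
    ∀ x ∈ Set.Ioo Λ₁ Λ₂, ∀ t ∈ Set.Ioo 0 T,
      deriv (fun t' => h (x, t')) t
        + deriv (fun x' =>
            (h (x', t) / 3 + 1 / β) * (h (x', t)) ^ 2
                * deriv (deriv (deriv (fun x'' => h (x'', t)))) x'
              - (1 / 2) * (deriv (fun x'' => ζ₁ (x'', t)) x') * (h (x', t)) ^ 2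
              - (1 / β) * (deriv (fun x'' => ζ₁ (x'', t)) x'
                  + (a / 2) * deriv (fun x'' => ζ₂ (x'', t)) x') * h (x', t)) x
        = 0 := by
  intro x hx t ht
  exact thin_film_equation_of_lubrication (H := fun x' => h (x', t))
    (Z₁ := deriv (fun x' => ζ₁ (x', t))) (Z₂ := deriv (fun x' => ζ₂ (x', t)))
    (ht := fun x' => deriv (fun t' => h (x', t')) t)
    (U := fun x' y' => u (x', y', t)) (V := fun x' y' => v (x', y', t))
    (P := fun x' y' => p (x', y', t)) isOpen_Ioo hβ.ne' (fun x' hx' => (hpos x' hx' t ht).le)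
    (hhx t) (hζ₁x t).differentiable_deriv_two (hζ₂x t).differentiable_deriv_two
    (fun _ => by fun_prop) (fun _ => (hv.differentiable two_ne_zero).comp (by fun_prop))
    (fun _ => (hp.differentiable two_ne_zero).comp (by fun_prop))
    (fun x' hx' => hincomp x' hx' t ht) (fun x' hx' => hstokes x' hx' t ht)
    (fun x' hx' => hpy x' hx' t ht) (fun x' hx' => hkin x' hx' t ht)
    (fun x' hx' => hpress x' hx' t ht) (fun x' hx' => htang x' hx' t ht)
    (fun x' hx' => hbot x' hx' t ht) (fun x' hx' => hslip x' hx' t ht) x hx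

/-- **Derivation of the thin film equation with small slip length.**
Let `Λ₁ < Λ₂`, `T > 0`, `β > 0`, `a ≥ 0`. Let `h > 0` be the film profile
(C⁴ in `x`, C¹ in `t`), `ζ₁, ζ₂` the surface density deviations (C² in
`x`), and `(u, v), p` the C² velocity and pressure in the film region
`Ω = {Λ₁ < x < Λ₂, 0 < y < h(x,t), 0 < t < T}`. Assume the lubrication
Stokes system (i) in `Ω`, the kinematic, Laplace-pressure and
Marangoni conditions (ii) at the free surface `y = h(x,t)`, and the
impermeability and generalized Navier slip conditions (iii) at `y = 0`.
Then `h` satisfies the thin film equation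
`∂ₜh + ∂ₓ[(h/3 + 1/β)h²∂ₓ³h − ½(∂ₓζ₁)h² − (1/β)(∂ₓζ₁ + (a/2)∂ₓζ₂)h] = 0`. -/
theorem thin_film_equation_derivation
    (Λ₁ Λ₂ T β a : ℝ) (hΛ : Λ₁ < Λ₂) (hT : 0 < T) (hβ : 0 < β) (ha : 0 ≤ a)
    (h ζ₁ ζ₂ : ℝ × ℝ → ℝ)
    (u v p : ℝ × ℝ × ℝ → ℝ)
    (hpos : ∀ x ∈ Set.Ioo Λ₁ Λ₂, ∀ t ∈ Set.Ioo 0 T, 0 < h (x, t))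
    (hhx : ∀ t : ℝ, ContDiff ℝ 4 (fun x => h (x, t)))
    (hht : ∀ x : ℝ, ContDiff ℝ 1 (fun t => h (x, t)))
    (hζ₁x : ∀ t : ℝ, ContDiff ℝ 2 (fun x => ζ₁ (x, t)))
    (hζ₂x : ∀ t : ℝ, ContDiff ℝ 2 (fun x => ζ₂ (x, t)))
    (hu : ContDiff ℝ 2 u) (hv : ContDiff ℝ 2 v) (hp : ContDiff ℝ 2 p)
    -- (i) in Ω
    (hincomp : ∀ x ∈ Set.Ioo Λ₁ Λ₂, ∀ t ∈ Set.Ioo 0 T,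
      ∀ y ∈ Set.Ioo 0 (h (x, t)),
        deriv (fun x' => u (x', y, t)) x
          + deriv (fun y' => v (x, y', t)) y = 0)
    (hstokes : ∀ x ∈ Set.Ioo Λ₁ Λ₂, ∀ t ∈ Set.Ioo 0 T,
      ∀ y ∈ Set.Ioo 0 (h (x, t)),
        deriv (deriv (fun y' => u (x, y', t))) y
          = deriv (fun x' => p (x', y, t)) x)
    (hpy : ∀ x ∈ Set.Ioo Λ₁ Λ₂, ∀ t ∈ Set.Ioo 0 T,
      ∀ y ∈ Set.Ioo 0 (h (x, t)),
        deriv (fun y' => p (x, y', t)) y = 0)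
    -- (ii) at y = h(x,t)
    (hkin : ∀ x ∈ Set.Ioo Λ₁ Λ₂, ∀ t ∈ Set.Ioo 0 T,
      deriv (fun t' => h (x, t')) t
          + u (x, h (x, t), t) * deriv (fun x' => h (x', t)) x
        = v (x, h (x, t), t))
    (hpress : ∀ x ∈ Set.Ioo Λ₁ Λ₂, ∀ t ∈ Set.Ioo 0 T,
      p (x, h (x, t), t) = -(deriv (deriv (fun x' => h (x', t))) x))
    (htang : ∀ x ∈ Set.Ioo Λ₁ Λ₂, ∀ t ∈ Set.Ioo 0 T,
      deriv (fun y' => u (x, y', t)) (h (x, t))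
        = -(deriv (fun x' => ζ₁ (x', t)) x))
    -- (iii) at y = 0
    (hbot : ∀ x ∈ Set.Ioo Λ₁ Λ₂, ∀ t ∈ Set.Ioo 0 T, v (x, 0, t) = 0)
    (hslip : ∀ x ∈ Set.Ioo Λ₁ Λ₂, ∀ t ∈ Set.Ioo 0 T,
      deriv (fun y' => u (x, y', t)) 0
        = (a / 2) * deriv (fun x' => ζ₂ (x', t)) x + β * u (x, 0, t)) :
    ∀ x ∈ Set.Ioo Λ₁ Λ₂, ∀ t ∈ Set.Ioo 0 T,
      deriv (fun t' => h (x, t')) t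
        + deriv (fun x' =>
            (h (x', t) / 3 + 1 / β) * (h (x', t)) ^ 2
                * deriv (deriv (deriv (fun x'' => h (x'', t)))) x'
              - (1 / 2) * (deriv (fun x'' => ζ₁ (x'', t)) x') * (h (x', t)) ^ 2
              - (1 / β) * (deriv (fun x'' => ζ₁ (x'', t)) x'
                  + (a / 2) * deriv (fun x'' => ζ₂ (x'', t)) x') * h (x', t)) x
        = 0 :=
  thin_film_equation_derivation_general Λ₁ Λ₂ T β a hβ h ζ₁ ζ₂ u v p hpos hhx hζ₁x hζ₂x hu hv hp
    hincomp hstokes hpy hkin hpress htang hbot hslip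
end

section
/- Let ν₁, ν₂, ν₃, n₁, n₂, n₃ ∈ ℝ³ be unit vectors with nᵢ · νᵢ = 0 for i = 1,2,3, and let p₁, p₂, p₃ ∈ ℝ satisfy Σᵢ pᵢ (I − nᵢ ⊗ nᵢ) νᵢ = 0. If ν₂ · ν₃ = −1 and θ ∈ ℝ satisfies cos θ = ν₁ · ν₂, then p₁ cos θ = p₃ − p₂. -/
open RealInnerProductSpace

/-- **Generalized Young equation at the contact line.**
Let `νᵢ, nᵢ ∈ ℝ³` be unit vectors with `nᵢ · νᵢ = 0`, and let the surface
pressures `pᵢ` satisfy the contact line momentum balance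
`Σᵢ pᵢ (I − nᵢ ⊗ nᵢ) νᵢ = 0`. If `ν₂ · ν₃ = −1` (the angle between the
interfaces along the solid is `π`) and `cos θ = ν₁ · ν₂`, then
`p₁ cos θ = p₃ - p₂`. -/
theorem young_equation
    (ν₁ ν₂ ν₃ n₁ n₂ n₃ : EuclideanSpace ℝ (Fin 3))
    (hν₁ : ‖ν₁‖ = 1) (hν₂ : ‖ν₂‖ = 1) (hν₃ : ‖ν₃‖ = 1)
    (hn₁ : ‖n₁‖ = 1) (hn₂ : ‖n₂‖ = 1) (hn₃ : ‖n₃‖ = 1)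
    (horth₁ : ⟪n₁, ν₁⟫ = 0) (horth₂ : ⟪n₂, ν₂⟫ = 0) (horth₃ : ⟪n₃, ν₃⟫ = 0)
    (p₁ p₂ p₃ : ℝ)
    (hbal : p₁ • (ν₁ - ⟪n₁, ν₁⟫ • n₁) + p₂ • (ν₂ - ⟪n₂, ν₂⟫ • n₂)
        + p₃ • (ν₃ - ⟪n₃, ν₃⟫ • n₃) = 0)
    (hflat : ⟪ν₂, ν₃⟫ = -1)
    (θ : ℝ) (hθ : Real.cos θ = ⟪ν₁, ν₂⟫) :
    p₁ * Real.cos θ = p₃ - p₂ := by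
  have h := congrArg (fun v => ⟪v, ν₂⟫) hbal
  simp only [horth₁, horth₂, horth₃, zero_smul, sub_zero, inner_add_left,
    inner_smul_left, inner_zero_left, RCLike.ofReal_real_eq_id, id] at h
  have h2 : ⟪ν₂, ν₂⟫ = (1 : ℝ) := by
    rw [real_inner_self_eq_norm_sq, hν₂]; norm_num
  simp only [RingHom.id_apply, starRingEnd_apply, star_trivial] at h
  have h3 : ⟪ν₃, ν₂⟫ = (-1:ℝ) := by rw [real_inner_comm]; exact hflat
  have h1 : ⟪ν₁, ν₂⟫ = Real.cos θ := hθ.symm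
  rw [h1, h2, h3] at h
  linarith
end

section
/- Let ρ₁, ρ₂, ρ₁ₑ, ρ₂ₑ, w₁, w₂, μₑ, m₁, m₂ ∈ ℝ with ρ₁ ≠ 0, w₁ ≠ 0 and m₂ ≠ 0, and set μᵢ := μₑ + mᵢ(ρᵢ − ρᵢₑ) for i = 1,2. If ρ₁ w₁ + ρ₂ w₂ = 0 and ρ₁ μ₁ w₁ + ρ₂ μ₂ w₂ = 0, then (m₁/m₂)(ρ₁ − ρ₁ₑ) = ρ₂ − ρ₂ₑ. -/
/-- **The missing contact line condition.**
Let `ρ₁ ≠ 0`, `w₁ ≠ 0`, `m₂ ≠ 0` and set `μᵢ = μₑ + mᵢ(ρᵢ − ρᵢₑ)`.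
If the mass balance `ρ₁w₁ + ρ₂w₂ = 0` and the chemical potential jump
condition `ρ₁μ₁w₁ + ρ₂μ₂w₂ = 0` hold at the contact line, then
`(m₁/m₂)(ρ₁ − ρ₁ₑ) = ρ₂ − ρ₂ₑ`. -/
theorem missing_contact_line_condition
    (ρ₁ ρ₂ ρ₁e ρ₂e w₁ w₂ μe m₁ m₂ : ℝ)
    (hρ₁ : ρ₁ ≠ 0) (hw₁ : w₁ ≠ 0) (hm₂ : m₂ ≠ 0)
    (μ₁ μ₂ : ℝ)
    (hμ₁ : μ₁ = μe + m₁ * (ρ₁ - ρ₁e))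
    (hμ₂ : μ₂ = μe + m₂ * (ρ₂ - ρ₂e))
    (hmass : ρ₁ * w₁ + ρ₂ * w₂ = 0)
    (hchem : ρ₁ * μ₁ * w₁ + ρ₂ * μ₂ * w₂ = 0) :
    (m₁ / m₂) * (ρ₁ - ρ₁e) = ρ₂ - ρ₂e := by
  have h2 : ρ₂ * w₂ = -(ρ₁ * w₁) := by linarith
  have hμeq : ρ₁ * w₁ * (μ₁ - μ₂) = 0 := by
    have : ρ₁ * μ₁ * w₁ + (-(ρ₁ * w₁)) * μ₂ = 0 := by
      rw [← h2]; linarith [hchem]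
    ring_nf
    ring_nf at this
    linarith
  have hμ : μ₁ = μ₂ := by
    rcases mul_eq_zero.1 hμeq with h | h
    · exact absurd h (mul_ne_zero hρ₁ hw₁)
    · linarith
  have hkey : m₁ * (ρ₁ - ρ₁e) = m₂ * (ρ₂ - ρ₂e) := by
    rw [hμ₁, hμ₂] at hμ; linarith
  field_simp
  linarith
end

section
/- For i = 1,2,3 let ρᵢ, uᵢ ∈ ℝ, let vᵢ, c, νᵢ, Jᵢ ∈ ℝ³, let nᵢ ∈ ℝ³ be a unit vector, and let Sᵢ ∈ ℝ^{3×3} be symmetric with Sᵢ nᵢ = 0; set vᵢ,τ := vᵢ − (vᵢ·nᵢ)nᵢ and wᵢ := vᵢ,τ − c. Assume the mass condition Σᵢ ρᵢ (wᵢ·νᵢ) = 0 and the momentum condition Σᵢ [ ρᵢ (wᵢ·νᵢ) vᵢ − Sᵢ νᵢ ] = 0. Then the condition Σᵢ [ ρᵢ(½|vᵢ|² + uᵢ)(wᵢ·νᵢ) − (Sᵢ vᵢ)·νᵢ + Jᵢ·νᵢ ] = 0 holds if and only if Σᵢ [ ρᵢ(uᵢ + ½|vᵢ − c|²)(wᵢ·νᵢ)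 − (Sᵢ wᵢ)·νᵢ + Jᵢ·νᵢ ] = 0. -/
open RealInnerProductSpace
open scoped BigOperators

/-- **Equivalence of the two forms of the energy balance at the contact line.**
For `i = 1,2,3` let `ρᵢ, uᵢ` be scalars, `vᵢ, c, νᵢ, Jᵢ ∈ ℝ³`, `nᵢ` unit
vectors, and `Sᵢ` symmetric with `Sᵢ nᵢ = 0`; set `vᵢ,τ = vᵢ − (vᵢ·nᵢ)nᵢ`
and `wᵢ = vᵢ,τ − c`. Assume the mass balance `Σᵢ ρᵢ(wᵢ·νᵢ) = 0` and the
momentum balance `Σᵢ [ρᵢ(wᵢ·νᵢ)vᵢ − Sᵢνᵢ] = 0`. Then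
`Σᵢ [ρᵢ(½|vᵢ|² + uᵢ)(wᵢ·νᵢ) − (Sᵢvᵢ)·νᵢ + Jᵢ·νᵢ] = 0` iff
`Σᵢ [ρᵢ(uᵢ + ½|vᵢ − c|²)(wᵢ·νᵢ) − (Sᵢwᵢ)·νᵢ + Jᵢ·νᵢ] = 0`. -/
theorem contact_line_energy_equivalence
    (ρ u : Fin 3 → ℝ)
    (v ν J n : Fin 3 → EuclideanSpace ℝ (Fin 3))
    (c : EuclideanSpace ℝ (Fin 3))
    (hn : ∀ i, ‖n i‖ = 1)
    (S : Fin 3 → EuclideanSpace ℝ (Fin 3) →ₗ[ℝ] EuclideanSpace ℝ (Fin 3))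
    (hSsymm : ∀ i x y, ⟪S i x, y⟫ = ⟪x, S i y⟫)
    (hSn : ∀ i, S i (n i) = 0)
    (w : Fin 3 → EuclideanSpace ℝ (Fin 3))
    (hw : ∀ i, w i = (v i - ⟪v i, n i⟫ • n i) - c)
    (hmass : ∑ i, ρ i * ⟪w i, ν i⟫ = 0)
    (hmom : ∑ i, ((ρ i * ⟪w i, ν i⟫) • v i - S i (ν i)) = 0) :
    (∑ i, (ρ i * ((1 / 2) * ‖v i‖ ^ 2 + u i) * ⟪w i, ν i⟫
        - ⟪S i (v i), ν i⟫ + ⟪J i, ν i⟫) = 0)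
    ↔ (∑ i, (ρ i * (u i + (1 / 2) * ‖v i - c‖ ^ 2) * ⟪w i, ν i⟫
        - ⟪S i (w i), ν i⟫ + ⟪J i, ν i⟫) = 0) := by
  -- pair the momentum balance with c
  have key : ∑ i, (ρ i * ⟪w i, ν i⟫ * ⟪v i, c⟫ - ⟪S i (ν i), c⟫) = 0 := by
    have := congrArg (fun x => ⟪x, c⟫) hmom
    simpa [sum_inner, inner_sub_left, inner_smul_left] using this
  -- S i (w i) = S i (v i) - S i c
  have hSw : ∀ i, S i (w i) = S i (v i) - S i c := by
    intro i
    rw [hw i]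
    simp [map_sub, map_smul, hSn i]
  -- the two sums are equal
  have hsum : ∀ i,
      (ρ i * ((1 / 2) * ‖v i‖ ^ 2 + u i) * ⟪w i, ν i⟫
        - ⟪S i (v i), ν i⟫ + ⟪J i, ν i⟫)
      = (ρ i * (u i + (1 / 2) * ‖v i - c‖ ^ 2) * ⟪w i, ν i⟫
        - ⟪S i (w i), ν i⟫ + ⟪J i, ν i⟫)
        + (ρ i * ⟪w i, ν i⟫ * ⟪v i, c⟫ - ⟪S i (ν i), c⟫)
        - ((1 / 2) * ‖c‖ ^ 2) * (ρ i * ⟪w i, ν i⟫) := by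
    intro i
    have hnorm : ‖v i - c‖ ^ 2 = ‖v i‖ ^ 2 - 2 * ⟪v i, c⟫ + ‖c‖ ^ 2 :=
      norm_sub_sq_real (v i) c
    have hSc : ⟪S i (w i), ν i⟫ = ⟪S i (v i), ν i⟫ - ⟪S i (ν i), c⟫ := by
      rw [hSw i, inner_sub_left, hSsymm i c (ν i), real_inner_comm c (S i (ν i))]
    rw [hnorm, hSc]
    ring
  have hEq : (∑ i, (ρ i * ((1 / 2) * ‖v i‖ ^ 2 + u i) * ⟪w i, ν i⟫
        - ⟪S i (v i), ν i⟫ + ⟪J i, ν i⟫))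
      = ∑ i, (ρ i * (u i + (1 / 2) * ‖v i - c‖ ^ 2) * ⟪w i, ν i⟫
        - ⟪S i (w i), ν i⟫ + ⟪J i, ν i⟫) := by
    calc (∑ i, (ρ i * ((1 / 2) * ‖v i‖ ^ 2 + u i) * ⟪w i, ν i⟫
        - ⟪S i (v i), ν i⟫ + ⟪J i, ν i⟫))
        = ∑ i, ((ρ i * (u i + (1 / 2) * ‖v i - c‖ ^ 2) * ⟪w i, ν i⟫
            - ⟪S i (w i), ν i⟫ + ⟪J i, ν i⟫)
          + (ρ i * ⟪w i, ν i⟫ * ⟪v i, c⟫ - ⟪S i (ν i), c⟫)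
          - ((1 / 2) * ‖c‖ ^ 2) * (ρ i * ⟪w i, ν i⟫)) := by
          exact Finset.sum_congr rfl fun i _ => hsum i
      _ = (∑ i, (ρ i * (u i + (1 / 2) * ‖v i - c‖ ^ 2) * ⟪w i, ν i⟫
            - ⟪S i (w i), ν i⟫ + ⟪J i, ν i⟫))
          + (∑ i, (ρ i * ⟪w i, ν i⟫ * ⟪v i, c⟫ - ⟪S i (ν i), c⟫))
          - ((1 / 2) * ‖c‖ ^ 2) * ∑ i, (ρ i * ⟪w i, ν i⟫) := by
          rw [Finset.sum_sub_distrib, Finset.sum_add_distrib, Finset.mul_sum]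
      _ = _ := by rw [key, hmass]; ring
  rw [hEq]
end

section
/- Let n ∈ ℝ³ be a unit vector and P := I − n ⊗ n. Let S^L, S^G ∈ ℝ^{3×3}, v^L, v^G, v^s ∈ ℝ³, α, β > 0, and g ∈ ℝ³. Assume: (i) ½ P((S^L + S^G) n) = β P(v^L − v^G); (ii) P v^s = ½ P(v^L + v^G) − α P((S^L − S^G) n); (iii) P((S^L − S^G) n) = g; (iv) P(S^G n) = 0. Then (1 + 4αβ) g + 4β P(v^s − v^L) = 0. -/
open RealInnerProductSpace

/-- **Tangential velocity relation (44) on the liquid–gas interface.**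
With `P = I − n ⊗ n` the tangential projection for the unit normal `n`,
suppose the Onsager relation (i) `½P((S^L + S^G)n) = β P(v^L − v^G)`,
the interface velocity relation (ii)
`P v^s = ½P(v^L + v^G) − α P((S^L − S^G)n)`, the tangential momentum
balance (iii) `P((S^L − S^G)n) = g`, and (iv) `P(S^G n) = 0` hold.
Then `(1 + 4αβ) g + 4β P(v^s − v^L) = 0`. -/
theorem interface_velocity_relation
    (n : EuclideanSpace ℝ (Fin 3)) (hn : ‖n‖ = 1)
    (SL SG : EuclideanSpace ℝ (Fin 3) →ₗ[ℝ] EuclideanSpace ℝ (Fin 3))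
    (vL vG vs g : EuclideanSpace ℝ (Fin 3))
    (α β : ℝ) (hα : 0 < α) (hβ : 0 < β)
    (P : EuclideanSpace ℝ (Fin 3) → EuclideanSpace ℝ (Fin 3))
    (hP : ∀ x, P x = x - ⟪n, x⟫ • n)
    (h1 : (1 / 2 : ℝ) • P (SL n + SG n) = β • P (vL - vG))
    (h2 : P vs = (1 / 2 : ℝ) • P (vL + vG) - α • P (SL n - SG n))
    (h3 : P (SL n - SG n) = g)
    (h4 : P (SG n) = 0) :
    (1 + 4 * α * β) • g + (4 * β) • P (vs - vL) = 0 := by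
  have hadd : ∀ x y, P (x + y) = P x + P y := by
    intro x y
    simp only [hP, inner_add_right, add_smul]
    module
  have hsub : ∀ x y, P (x - y) = P x - P y := by
    intro x y
    simp only [hP, inner_sub_right, sub_smul]
    module
  have hg : P (SL n) = g := by
    have := h3
    rw [hsub, h4, sub_zero] at this
    exact this
  have h1' : β • (P vL - P vG) = (1 / 2 : ℝ) • g := by
    rw [← hsub, ← h1, hadd, hg, h4, add_zero]
  have h2' : P vs = (1 / 2 : ℝ) • (P vL + P vG) - α • g := by
    rw [h2, hadd, h3]
  rw [hsub, h2']
  linear_combination (norm := module) (-2 : ℝ) • h1'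
end

section
/- Let T > 0. For i = 1,2,3 let ρᵢ, uᵢ, sᵢ, μᵢ, pᵢ ∈ ℝ, let nᵢ, νᵢ ∈ ℝ³ be unit vectors with nᵢ·νᵢ = 0, let vᵢ, c, Jᵢ ∈ ℝ³, and set Sᵢ := −pᵢ(I − nᵢ ⊗ nᵢ), vᵢ,τ := vᵢ − (vᵢ·nᵢ)nᵢ and wᵢ := vᵢ,τ − c. Assume the Gibbs relations T ρᵢ sᵢ = ρᵢ uᵢ − ρᵢ μᵢ + pᵢ for i = 1,2,3, the energy condition Σᵢ [ ρᵢ(uᵢ + ½|vᵢ − c|²)(wᵢ·νᵢ) − (Sᵢ wᵢ)·νᵢ + Jᵢ·νᵢ ] = 0, and the entropy condition Σᵢ [ ρᵢ sᵢ (wᵢ·νᵢ) + (Jᵢ·νᵢ)/T ] = 0. Then Σᵢ ρᵢ (μᵢ + ½|vᵢ − c|²)(wᵢ·νᵢ) = 0. -/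
open RealInnerProductSpace
open scoped BigOperators

/-- **Reduced contact-line condition (entropy_cont).**
At temperature `T > 0`, for each interface `i = 1,2,3` with surface
density `ρᵢ`, internal energy `uᵢ`, entropy `sᵢ`, chemical potential
`μᵢ`, surface pressure `pᵢ` (so the surface stress is
`Sᵢ = −pᵢ(I − nᵢ⊗nᵢ)`), unit vectors `nᵢ ⊥ νᵢ`, velocities `vᵢ`, heat
fluxes `Jᵢ`, contact line velocity `c`, `vᵢ,τ = vᵢ − (vᵢ·nᵢ)nᵢ` and
`wᵢ = vᵢ,τ − c`: if the Gibbs relations `Tρᵢsᵢ = ρᵢuᵢ − ρᵢμᵢ + pᵢ`, the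
energy condition and the entropy condition hold at the contact line,
then `Σᵢ ρᵢ(μᵢ + ½|vᵢ − c|²)(wᵢ·νᵢ) = 0`. -/
theorem contact_line_chemical_potential_condition
    (T : ℝ) (hT : 0 < T)
    (ρ u s μ p : Fin 3 → ℝ)
    (n ν : Fin 3 → EuclideanSpace ℝ (Fin 3))
    (hn : ∀ i, ‖n i‖ = 1) (hν : ∀ i, ‖ν i‖ = 1)
    (horth : ∀ i, ⟪n i, ν i⟫ = 0)
    (v J : Fin 3 → EuclideanSpace ℝ (Fin 3))
    (c : EuclideanSpace ℝ (Fin 3))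
    (w : Fin 3 → EuclideanSpace ℝ (Fin 3))
    (hw : ∀ i, w i = (v i - ⟪v i, n i⟫ • n i) - c)
    (S : Fin 3 → EuclideanSpace ℝ (Fin 3) → EuclideanSpace ℝ (Fin 3))
    (hS : ∀ i x, S i x = (-(p i)) • (x - ⟪n i, x⟫ • n i))
    (hGibbs : ∀ i, T * (ρ i * s i) = ρ i * u i - ρ i * μ i + p i)
    (henergy : ∑ i, (ρ i * (u i + (1 / 2) * ‖v i - c‖ ^ 2) * ⟪w i, ν i⟫
        - ⟪S i (w i), ν i⟫ + ⟪J i, ν i⟫) = 0)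
    (hentropy : ∑ i, (ρ i * s i * ⟪w i, ν i⟫ + ⟪J i, ν i⟫ / T) = 0) :
    ∑ i, ρ i * (μ i + (1 / 2) * ‖v i - c‖ ^ 2) * ⟪w i, ν i⟫ = 0 := by
  have hkey : ∀ i, ρ i * (μ i + (1 / 2) * ‖v i - c‖ ^ 2) * ⟪w i, ν i⟫
      = (ρ i * (u i + (1 / 2) * ‖v i - c‖ ^ 2) * ⟪w i, ν i⟫
        - ⟪S i (w i), ν i⟫ + ⟪J i, ν i⟫)
        - T * (ρ i * s i * ⟪w i, ν i⟫ + ⟪J i, ν i⟫ / T) := by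
    intro i
    have hSw : ⟪S i (w i), ν i⟫ = -(p i) * ⟪w i, ν i⟫ := by
      rw [hS, real_inner_smul_left, inner_sub_left, real_inner_smul_left, horth i]
      ring
    have hG := hGibbs i
    have hJ : T * (⟪J i, ν i⟫ / T) = ⟪J i, ν i⟫ := by
      field_simp
    rw [hSw]
    linear_combination (⟪w i, ν i⟫ : ℝ) * hG + hJ
  calc ∑ i, ρ i * (μ i + (1 / 2) * ‖v i - c‖ ^ 2) * ⟪w i, ν i⟫
      = ∑ i, ((ρ i * (u i + (1 / 2) * ‖v i - c‖ ^ 2) * ⟪w i, ν i⟫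
        - ⟪S i (w i), ν i⟫ + ⟪J i, ν i⟫)
        - T * (ρ i * s i * ⟪w i, ν i⟫ + ⟪J i, ν i⟫ / T)) :=
        Finset.sum_congr rfl fun i _ => hkey i
    _ = (∑ i, (ρ i * (u i + (1 / 2) * ‖v i - c‖ ^ 2) * ⟪w i, ν i⟫
        - ⟪S i (w i), ν i⟫ + ⟪J i, ν i⟫))
        - T * ∑ i, (ρ i * s i * ⟪w i, ν i⟫ + ⟪J i, ν i⟫ / T) := by
        rw [Finset.sum_sub_distrib, Finset.mul_sum]
    _ = 0 := by rw [henergy, hentropy]; ring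
end
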